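/- Let C be a finite nonempty set of square-free positive integers, all of whose prime divisors lie in a finite set P of primes. Define S := {{p ∈ C ∸ c : p prime} | c maximal for C}. Then S is an antichain under inclusion, i.e., no member of S is properly contained in another. -/

import Mathlib

/-!
Suppose `Q₁ ⊊ Q₂` for the prime parts `Qᵢ` of `C ∸ cᵢ`, and pick `q = a ∸ c₂ ∈ Q₂ \ Q₁`.
Since `1 ∉ C ∸ c₁`, the residue `a ∸ c₁` has a prime factor `p`; maximality of `c₁` gives some
`b ∈ C` with `b ∣ c₁ p` but `b ∤ c₁`, and square-freeness forces `b ∸ c₁ = p`, so `p ∈ Q₁ ⊆ Q₂`.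
Residues of square-free numbers are coprime to the modulus, hence `p ∤ c₂`. But `p ∣ a = gcd(a, c₂) q`
with `p ≠ q`, so `p ∣ c₂`.
-/

/-- For positive integers `a`, `c` define `a ∸ c := a / gcd(a, c)`. -/
def dd (a c : ℕ) : ℕ := a / Nat.gcd a c

/-- `C ∸ c := {a ∸ c | a ∈ C}`. -/
def ddSet (C : Finset ℕ) (c : ℕ) : Finset ℕ := C.image (fun a => dd a c)

/-- `c` is maximal for `C` if `1 ∉ C ∸ c` and `1 ∈ C ∸ (c·d)` for every
`d > 1` dividing `lcm (C ∸ c)`. -/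
def MaximalForDd (C : Finset ℕ) (c : ℕ) : Prop :=
  1 ∉ ddSet C c ∧ ∀ d : ℕ, 1 < d → d ∣ (ddSet C c).lcm id → 1 ∈ ddSet C (c * d)

lemma gcd_mul_dd (a c : ℕ) : Nat.gcd a c * dd a c = a :=
  Nat.mul_div_cancel' (Nat.gcd_dvd_left a c)

lemma dd_dvd (a c : ℕ) : dd a c ∣ a :=
  Dvd.intro_left _ (gcd_mul_dd a c)

lemma dd_eq_one_iff {a : ℕ} (ha : 0 < a) (c : ℕ) : dd a c = 1 ↔ a ∣ c := by
  constructor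
  · intro h
    rw [← gcd_mul_dd a c, h, mul_one]
    exact Nat.gcd_dvd_right a c
  · intro h
    rw [dd, Nat.gcd_eq_left h, Nat.div_self ha]

lemma mem_ddSet_of_mem {C : Finset ℕ} {a : ℕ} (ha : a ∈ C) (c : ℕ) : dd a c ∈ ddSet C c :=
  Finset.mem_image_of_mem _ ha

lemma Squarefree.coprime_dd {a : ℕ} (hsf : Squarefree a) (c : ℕ) : Nat.Coprime (dd a c) c := by
  refine Nat.coprime_of_dvd fun r hr hrdd hrc => ?_
  have hrgcd : r ∣ Nat.gcd a c := Nat.dvd_gcd (hrdd.trans (dd_dvd a c)) hrc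
  have hrr : r * r ∣ a := gcd_mul_dd a c ▸ mul_dvd_mul hrgcd hrdd
  exact Nat.squarefree_iff_prime_squarefree.mp hsf r hr hrr

lemma Squarefree.not_dvd_of_dd_eq {a c p : ℕ} (hsf : Squarefree a) (hp : p.Prime)
    (h : dd a c = p) : ¬ p ∣ c := fun hpc =>
  hp.one_lt.ne' (Nat.Coprime.eq_one_of_dvd (h ▸ hsf.coprime_dd c) hpc)

lemma Squarefree.dd_eq_of_dvd_mul_prime {b c p : ℕ} (hb : 0 < b) (hsf : Squarefree b)
    (hp : p.Prime) (hdvd : b ∣ c * p) (hnd : ¬ b ∣ c) : dd b c = p := by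
  have hdvd_p : dd b c ∣ p :=
    (hsf.coprime_dd c).dvd_of_dvd_mul_left ((dd_dvd b c).trans hdvd)
  exact ((Nat.dvd_prime hp).mp hdvd_p).resolve_left (mt (dd_eq_one_iff hb c).mp hnd)

lemma dvd_of_dvd_of_dd_eq_prime {a c p q : ℕ} (hp : p.Prime) (hq : q.Prime) (hdd : dd a c = q)
    (hpa : p ∣ a) (hpq : p ≠ q) : p ∣ c := by
  rw [← gcd_mul_dd a c, hdd] at hpa
  have hp_not_dvd_q : ¬ p ∣ q := fun h => hpq ((Nat.prime_dvd_prime_iff_eq hp hq).mp h)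
  exact ((hp.dvd_mul.mp hpa).resolve_right hp_not_dvd_q).trans (Nat.gcd_dvd_right a c)

lemma MaximalForDd.prime_mem_ddSet {C : Finset ℕ} {c p a : ℕ} (hpos : ∀ a ∈ C, 0 < a)
    (hsf : ∀ a ∈ C, Squarefree a) (hc : MaximalForDd C c) (hp : p.Prime) (ha : a ∈ C)
    (hpa : p ∣ dd a c) : p ∈ ddSet C c := by
  have hplcm : p ∣ (ddSet C c).lcm id := hpa.trans (Finset.dvd_lcm (mem_ddSet_of_mem ha c))
  obtain ⟨b, hb, hbdd⟩ := Finset.mem_image.mp (hc.2 p hp.one_lt hplcm)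
  have hb_not_dvd : ¬ b ∣ c := fun h =>
    hc.1 ((dd_eq_one_iff (hpos b hb) c).mpr h ▸ mem_ddSet_of_mem hb c)
  have hb_dvd : b ∣ c * p := (dd_eq_one_iff (hpos b hb) (c * p)).mp hbdd
  exact (hsf b hb).dd_eq_of_dvd_mul_prime (hpos b hb) hp hb_dvd hb_not_dvd ▸ mem_ddSet_of_mem hb c

theorem stmt_19_general (C : Finset ℕ)
    (hpos : ∀ a ∈ C, 0 < a) (hsf : ∀ a ∈ C, Squarefree a) :
    ∀ c₁ c₂ : ℕ, 0 < c₁ → 0 < c₂ → MaximalForDd C c₁ → MaximalForDd C c₂ →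
      ¬ ((ddSet C c₁).filter Nat.Prime ⊂ (ddSet C c₂).filter Nat.Prime) := by
  intro c₁ c₂ _ _ h₁ _ hss
  obtain ⟨q, hq₂, hq₁⟩ := Finset.exists_of_ssubset hss
  obtain ⟨hq_mem, hq⟩ := Finset.mem_filter.mp hq₂
  obtain ⟨a, ha, hadd⟩ := Finset.mem_image.mp hq_mem
  obtain ⟨p, hp, hpdvd⟩ := Nat.exists_prime_and_dvd fun h => h₁.1 (h ▸ mem_ddSet_of_mem ha c₁)
  have hp₁ : p ∈ (ddSet C c₁).filter Nat.Prime :=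
    Finset.mem_filter.mpr ⟨h₁.prime_mem_ddSet hpos hsf hp ha hpdvd, hp⟩
  have hpq : p ≠ q := by
    rintro rfl
    exact hq₁ hp₁
  obtain ⟨b, hb, hbdd⟩ := Finset.mem_image.mp (Finset.mem_filter.mp (hss.subset hp₁)).1
  exact (hsf b hb).not_dvd_of_dd_eq hp hbdd
    (dvd_of_dvd_of_dd_eq_prime hp hq hadd (hpdvd.trans (dd_dvd a c₁)) hpq)

theorem stmt_19 (C P : Finset ℕ) (hC : C.Nonempty)
    (hpos : ∀ a ∈ C, 0 < a) (hsf : ∀ a ∈ C, Squarefree a)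
    (hPp : ∀ p ∈ P, p.Prime)
    (hP : ∀ a ∈ C, ∀ p : ℕ, p.Prime → p ∣ a → p ∈ P) :
    ∀ c₁ c₂ : ℕ, 0 < c₁ → 0 < c₂ → MaximalForDd C c₁ → MaximalForDd C c₂ →
      ¬ ((ddSet C c₁).filter Nat.Prime ⊂ (ddSet C c₂).filter Nat.Prime) :=
  stmt_19_general C hpos hsf
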